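/- Let π be the bivector field on ℝ^6 given by π = −2x3 ∂x2∧∂x1 − 2x2 ∂x3∧∂x1 + (5x1⁴+3t1x1²+2t2x1+t3) ∂x3∧∂x2 (the butterfly model). Then π is a Poisson bivector. -/

import Mathlib

/-- Partial derivative in the `i`-th coordinate direction on `ℝ⁶`. -/
noncomputable def pd (i : Fin 6) (g : (Fin 6 → ℝ) → ℝ) (p : Fin 6 → ℝ) : ℝ :=
  fderiv ℝ g p (Pi.single i 1)

/-- Coordinates: `p 0, p 1, p 2` are `t1, t2, t3` and `p 3, p 4, p 5` are `x1, x2, x3`.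
The butterfly bivector `π = −2x3 ∂x2∧∂x1 − 2x2 ∂x3∧∂x1 + (5x1⁴+3t1x1²+2t2x1+t3) ∂x3∧∂x2`. -/
noncomputable def piv (p : Fin 6 → ℝ) : Fin 6 → Fin 6 → ℝ := fun i j =>
  if i = 4 ∧ j = 3 then -(2 * p 5)
  else if i = 3 ∧ j = 4 then -(-(2 * p 5))
  else if i = 5 ∧ j = 3 then -(2 * p 4)
  else if i = 3 ∧ j = 5 then -(-(2 * p 4))
  else if i = 5 ∧ j = 4 then 5 * (p 3) ^ 4 + 3 * p 0 * (p 3) ^ 2 + 2 * p 1 * p 3 + p 2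
  else if i = 4 ∧ j = 5 then -(5 * (p 3) ^ 4 + 3 * p 0 * (p 3) ^ 2 + 2 * p 1 * p 3 + p 2)
  else 0

/-- The bracket `{g,h} = π(dg,dh)` induced by the bivector `π`. -/
noncomputable def bracket (g h : (Fin 6 → ℝ) → ℝ) (p : Fin 6 → ℝ) : ℝ :=
  ∑ i, ∑ j, piv p i j * pd i g p * pd j h p

/- ### Auxiliary lemmas -/

lemma pd_add' {f g : (Fin 6 → ℝ) → ℝ} {p : Fin 6 → ℝ} (i : Fin 6)
    (hf : DifferentiableAt ℝ f p) (hg : DifferentiableAt ℝ g p) :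
    pd i (fun q => f q + g q) p = pd i f p + pd i g p := by
  simp [pd, fderiv_fun_add hf hg]

lemma pd_sub' {f g : (Fin 6 → ℝ) → ℝ} {p : Fin 6 → ℝ} (i : Fin 6)
    (hf : DifferentiableAt ℝ f p) (hg : DifferentiableAt ℝ g p) :
    pd i (fun q => f q - g q) p = pd i f p - pd i g p := by
  simp [pd, fderiv_fun_sub hf hg]

lemma pd_mul' {f g : (Fin 6 → ℝ) → ℝ} {p : Fin 6 → ℝ} (i : Fin 6)
    (hf : DifferentiableAt ℝ f p) (hg : DifferentiableAt ℝ g p) :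
    pd i (fun q => f q * g q) p = pd i f p * g p + f p * pd i g p := by
  simp [pd, fderiv_fun_mul hf hg]; ring

lemma pd_neg' {f : (Fin 6 → ℝ) → ℝ} {p : Fin 6 → ℝ} (i : Fin 6) :
    pd i (fun q => -f q) p = -pd i f p := by
  simp [pd, fderiv_neg]

lemma pd_const' {p : Fin 6 → ℝ} (i : Fin 6) (a : ℝ) :
    pd i (fun _ => a) p = 0 := by
  simp [pd]

lemma pd_coord' (i j : Fin 6) (p : Fin 6 → ℝ) :
    pd i (fun q => q j) p = if j = i then 1 else 0 := by
  have h : (fun q : Fin 6 → ℝ => q j) = (ContinuousLinearMap.proj j : (Fin 6 → ℝ) →L[ℝ] ℝ) := rfl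
  rw [pd, h, ContinuousLinearMap.fderiv]
  simp [Pi.single_apply]

lemma contDiff_pd (i : Fin 6) {g : (Fin 6 → ℝ) → ℝ} (hg : ContDiff ℝ (⊤ : ℕ∞) g) :
    ContDiff ℝ (⊤ : ℕ∞) (pd i g) := by
  show ContDiff ℝ (⊤ : ℕ∞) fun p => fderiv ℝ g p (Pi.single i 1)
  exact (hg.fderiv_right (by simp)).clm_apply contDiff_const

lemma pd_comm {g : (Fin 6 → ℝ) → ℝ} (hg : ContDiff ℝ (⊤ : ℕ∞) g) (i j : Fin 6) (p : Fin 6 → ℝ) :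
    pd i (pd j g) p = pd j (pd i g) p := by
  have hd : Differentiable ℝ (fderiv ℝ g) := (hg.fderiv_right (m := 1) (by exact WithTop.coe_le_coe.mpr le_top)).differentiable (by simp)
  have h1 : ∀ v w : Fin 6 → ℝ, fderiv ℝ (fun q => fderiv ℝ g q v) p w
      = fderiv ℝ (fderiv ℝ g) p w v := by
    intro v w
    rw [fderiv_clm_apply (hd p) (differentiableAt_const v)]
    simp
  have hsym := (hg.contDiffAt (x := p)).isSymmSndFDerivAt (by rw [minSmoothness_of_isRCLikeNormedField]; exact WithTop.coe_le_coe.mpr le_top)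
  show fderiv ℝ (fun q => fderiv ℝ g q (Pi.single j 1)) p (Pi.single i 1)
      = fderiv ℝ (fun q => fderiv ℝ g q (Pi.single i 1)) p (Pi.single j 1)
  rw [h1, h1]
  exact hsym.eq _ _

noncomputable def bcf1 (q : Fin 6 → ℝ) : ℝ := -(2 * q 5)
noncomputable def bcf2 (q : Fin 6 → ℝ) : ℝ := -(2 * q 4)
noncomputable def bcf3 (q : Fin 6 → ℝ) : ℝ :=
  5 * (q 3 * q 3 * q 3 * q 3) + 3 * q 0 * (q 3 * q 3) + 2 * q 1 * q 3 + q 2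

lemma bracket_eq (g h : (Fin 6 → ℝ) → ℝ) (p : Fin 6 → ℝ) :
    bracket g h p =
      bcf1 p * (pd 4 g p * pd 3 h p - pd 3 g p * pd 4 h p)
      + bcf2 p * (pd 5 g p * pd 3 h p - pd 3 g p * pd 5 h p)
      + bcf3 p * (pd 5 g p * pd 4 h p - pd 4 g p * pd 5 h p) := by
  simp [bracket, Fin.sum_univ_six, piv, bcf1, bcf2, bcf3]
  ring

set_option maxHeartbeats 4000000 in
/-- The bivector satisfies the Jacobi identity, i.e. it is Poisson. -/
theorem butterfly_bivector_is_poisson :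
    ∀ g h k : (Fin 6 → ℝ) → ℝ, ContDiff ℝ (⊤ : ℕ∞) g → ContDiff ℝ (⊤ : ℕ∞) h → ContDiff ℝ (⊤ : ℕ∞) k →
    ∀ p : Fin 6 → ℝ,
      bracket g (bracket h k) p + bracket h (bracket k g) p
        + bracket k (bracket g h) p = 0 := by
  intro g h k hg hh hk p
  have dg3 : Differentiable ℝ (pd 3 g) := (contDiff_pd 3 hg).differentiable (by simp)
  have dg4 : Differentiable ℝ (pd 4 g) := (contDiff_pd 4 hg).differentiable (by simp)
  have dg5 : Differentiable ℝ (pd 5 g) := (contDiff_pd 5 hg).differentiable (by simp)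
  have dh3 : Differentiable ℝ (pd 3 h) := (contDiff_pd 3 hh).differentiable (by simp)
  have dh4 : Differentiable ℝ (pd 4 h) := (contDiff_pd 4 hh).differentiable (by simp)
  have dh5 : Differentiable ℝ (pd 5 h) := (contDiff_pd 5 hh).differentiable (by simp)
  have dk3 : Differentiable ℝ (pd 3 k) := (contDiff_pd 3 hk).differentiable (by simp)
  have dk4 : Differentiable ℝ (pd 4 k) := (contDiff_pd 4 hk).differentiable (by simp)
  have dk5 : Differentiable ℝ (pd 5 k) := (contDiff_pd 5 hk).differentiable (by simp)
  have hbhk : bracket h k = fun q =>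
      bcf1 q * (pd 4 h q * pd 3 k q - pd 3 h q * pd 4 k q)
      + bcf2 q * (pd 5 h q * pd 3 k q - pd 3 h q * pd 5 k q)
      + bcf3 q * (pd 5 h q * pd 4 k q - pd 4 h q * pd 5 k q) :=
    funext fun q => bracket_eq h k q
  have hbkg : bracket k g = fun q =>
      bcf1 q * (pd 4 k q * pd 3 g q - pd 3 k q * pd 4 g q)
      + bcf2 q * (pd 5 k q * pd 3 g q - pd 3 k q * pd 5 g q)
      + bcf3 q * (pd 5 k q * pd 4 g q - pd 4 k q * pd 5 g q) :=
    funext fun q => bracket_eq k g q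
  have hbgh : bracket g h = fun q =>
      bcf1 q * (pd 4 g q * pd 3 h q - pd 3 g q * pd 4 h q)
      + bcf2 q * (pd 5 g q * pd 3 h q - pd 3 g q * pd 5 h q)
      + bcf3 q * (pd 5 g q * pd 4 h q - pd 4 g q * pd 5 h q) :=
    funext fun q => bracket_eq g h q
  rw [bracket_eq g (bracket h k) p, bracket_eq h (bracket k g) p, bracket_eq k (bracket g h) p,
    hbhk, hbkg, hbgh]
  simp (disch := fun_prop) only [bcf1, bcf2, bcf3, pd_add', pd_sub', pd_mul', pd_neg',
    pd_const', pd_coord']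
  simp only [Fin.reduceEq, reduceIte, mul_zero, zero_mul, mul_one, add_zero, zero_add,
    sub_zero, zero_sub, neg_zero, mul_neg, neg_neg]
  simp only [pd_comm hg 4 3, pd_comm hg 5 3, pd_comm hg 5 4,
    pd_comm hh 4 3, pd_comm hh 5 3, pd_comm hh 5 4,
    pd_comm hk 4 3, pd_comm hk 5 3, pd_comm hk 5 4]
  ring
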